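/- Let f : [0,2] → ℝ be a continuous convex function with f(0) = 0, f(2) = 1, f(x) ≥ 0 for all x ∈ [0,2], and satisfying the symmetry f(2 − x) = 1 − x + f(x) for all x ∈ [0,2]. Then for every x ∈ [0,2], f(x) ≥ max(0, (x−1)/2 + f(1)/2, x − 1). In other words, f lies on or above the piecewise linear function f₀ with f₀ = 0 on [0, 1 − f(1)], slope 1/2 on [1 − f(1), 1 + f(1)], and slope 1 on [1 + f(1), 2], which satisfies f₀(0) = 0, f₀(2) = 1, and f₀(1) = f(1)/2. -/

import Mathlib

/-!
Midpoint convexity at the symmetric pair `x, 2 - x` gives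
`f 1 ≤ (f x + f (2 - x)) / 2 = f x + (1 - x) / 2`, and `f 1 ≥ 0` makes this stronger than the
middle bound. The symmetry alone gives `f x = x - 1 + f (2 - x) ≥ x - 1`.
-/

open Set

theorem two_sub_mem_Icc_zero_two {x : ℝ} (hx : x ∈ Icc (0 : ℝ) 2) : 2 - x ∈ Icc (0 : ℝ) 2 :=
  ⟨by linarith [hx.2], by linarith [hx.1]⟩

theorem map_one_add_sub_one_div_two_le {f : ℝ → ℝ} (hconv : ConvexOn ℝ (Icc 0 2) f)
    (hsymm : ∀ x ∈ Icc (0 : ℝ) 2, f (2 - x) = 1 - x + f x) {x : ℝ} (hx : x ∈ Icc (0 : ℝ) 2) :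
    f 1 + (x - 1) / 2 ≤ f x := by
  have hmid : f 1 ≤ (f x + f (2 - x)) / 2 := by
    have := hconv.2 hx (two_sub_mem_Icc_zero_two hx) (by norm_num : (0 : ℝ) ≤ 1 / 2)
      (by norm_num : (0 : ℝ) ≤ 1 / 2) (by norm_num)
    simp only [smul_eq_mul] at this
    rw [show (1 / 2 : ℝ) * x + 1 / 2 * (2 - x) = 1 by ring] at this
    linarith
  linarith [hsymm x hx]

theorem stmt8_general (f : ℝ → ℝ)
    (hconv : ConvexOn ℝ (Set.Icc 0 2) f)
    (hnonneg : ∀ x ∈ Set.Icc (0 : ℝ) 2, 0 ≤ f x)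
    (hsymm : ∀ x ∈ Set.Icc (0 : ℝ) 2, f (2 - x) = 1 - x + f x) :
    ∀ x ∈ Set.Icc (0 : ℝ) 2,
      max 0 (max ((x - 1) / 2 + f 1 / 2) (x - 1)) ≤ f x := by
  intro x hx
  have hf1 : 0 ≤ f 1 := hnonneg 1 ⟨zero_le_one, one_le_two⟩
  have hmiddle := map_one_add_sub_one_div_two_le hconv hsymm hx
  have hreflect : x - 1 ≤ f x := by linarith [hsymm x hx, hnonneg _ (two_sub_mem_Icc_zero_two hx)]
  exact max_le (hnonneg x hx) (max_le (by linarith) hreflect)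

/-- let `f : [0,2] → ℝ` be a continuous convex function with
`f 0 = 0`, `f 2 = 1`, `f ≥ 0`, satisfying the symmetry
`f (2 − x) = 1 − x + f x` for all `x ∈ [0,2]`.  Then
`f x ≥ max (0, (x−1)/2 + f 1 / 2, x − 1)` for every `x ∈ [0,2]`. -/
theorem stmt8 (f : ℝ → ℝ)
    (hconv : ConvexOn ℝ (Set.Icc 0 2) f)
    (hcont : ContinuousOn f (Set.Icc 0 2))
    (h0 : f 0 = 0) (h2 : f 2 = 1)
    (hnonneg : ∀ x ∈ Set.Icc (0 : ℝ) 2, 0 ≤ f x)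
    (hsymm : ∀ x ∈ Set.Icc (0 : ℝ) 2, f (2 - x) = 1 - x + f x) :
    ∀ x ∈ Set.Icc (0 : ℝ) 2,
      max 0 (max ((x - 1) / 2 + f 1 / 2) (x - 1)) ≤ f x :=
  stmt8_general f hconv hnonneg hsymm
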